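/- arXiv:2206.11956 — 5 statements merged into one kernel-verified Lean document; each statement's English description precedes it below -/
import Mathlib

section
/- For every transposition τ in S_n and every g in S_n, the commutator [g, τ] = g⁻¹τ⁻¹gτ has order dividing 6. Hence the word with constants w(x) = [x, τ]^6 is a mixed identity for S_n. -/
/-!
Since `g⁻¹ τ⁻¹ g = g⁻¹ τ g` is again a transposition, `[g, τ]` is a product of two
transpositions. Two transpositions either coincide (product `1`), share exactly one point
(product a 3-cycle), or are disjoint (commuting involutions, product of order dividing 2).
-/

open Equiv

namespace Equiv.Perm

variable {α : Type*} [DecidableEq α]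

theorem orderOf_swap_dvd_two (a b : α) : orderOf (swap a b) ∣ 2 :=
  orderOf_dvd_of_pow_eq_one (by rw [sq, swap_mul_self])

theorem swap_mul_swap_pow_three_of_ne {a b c : α} (hab : a ≠ b) (hac : a ≠ c) :
    (swap a b * swap a c) ^ 3 = 1 := by
  ext x
  simp only [pow_succ, pow_zero, one_mul, mul_apply, one_apply, swap_apply_def]
  grind

theorem orderOf_swap_mul_swap_dvd_six (a b c d : α) : orderOf (swap a b * swap c d) ∣ 6 := by
  have sharing {x y z : α} (hxy : x ≠ y) (hxz : x ≠ z) : orderOf (swap x y * swap x z) ∣ 6 :=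
    (orderOf_dvd_of_pow_eq_one (swap_mul_swap_pow_three_of_ne hxy hxz)).trans (by norm_num)
  have two_dvd_six : 2 ∣ 6 := by norm_num
  rcases eq_or_ne a b with rfl | hab
  · rw [swap_self, ← one_def, one_mul]
    exact (orderOf_swap_dvd_two c d).trans two_dvd_six
  rcases eq_or_ne c d with rfl | hcd
  · rw [swap_self, ← one_def, mul_one]
    exact (orderOf_swap_dvd_two a b).trans two_dvd_six
  rcases eq_or_ne a c with rfl | hac
  · exact sharing hab hcd
  rcases eq_or_ne a d with rfl | had
  · rw [swap_comm c a]
    exact sharing hab hac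
  rcases eq_or_ne b c with rfl | hbc
  · rw [swap_comm a b]
    exact sharing hab.symm hcd
  rcases eq_or_ne b d with rfl | hbd
  · rw [swap_comm a b, swap_comm c b]
    exact sharing hab.symm hbc
  have hdisj : Disjoint (swap a b) (swap c d) := disjoint_swap_swap (by simp [*])
  exact hdisj.commute.orderOf_mul_dvd_lcm.trans <| Nat.lcm_dvd
    ((orderOf_swap_dvd_two a b).trans two_dvd_six) ((orderOf_swap_dvd_two c d).trans two_dvd_six)

end Equiv.Perm

theorem commutator_with_transposition_order_dvd_six_general (n : ℕ) (a b : Fin n)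
    (g : Equiv.Perm (Fin n)) :
    orderOf (g⁻¹ * (Equiv.swap a b)⁻¹ * g * Equiv.swap a b) ∣ 6 ∧
      (g⁻¹ * (Equiv.swap a b)⁻¹ * g * Equiv.swap a b) ^ 6 = 1 := by
  have hconj : g⁻¹ * (swap a b)⁻¹ * g = swap (g⁻¹ a) (g⁻¹ b) := by
    rw [swap_inv, swap_apply_apply, inv_inv]
  have h6 := Perm.orderOf_swap_mul_swap_dvd_six (g⁻¹ a) (g⁻¹ b) a b
  rw [hconj]
  exact ⟨h6, orderOf_dvd_iff_pow_eq_one.mp h6⟩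

/-- For every transposition `τ = swap a b` in `S_n` and every `g`, the commutator
`[g, τ] = g⁻¹ τ⁻¹ g τ` has order dividing 6; hence `w(x) = [x, τ]^6` is a mixed
identity for `S_n`. -/
theorem commutator_with_transposition_order_dvd_six (n : ℕ) (a b : Fin n) (hab : a ≠ b)
    (g : Equiv.Perm (Fin n)) :
    orderOf (g⁻¹ * (Equiv.swap a b)⁻¹ * g * Equiv.swap a b) ∣ 6 ∧
      (g⁻¹ * (Equiv.swap a b)⁻¹ * g * Equiv.swap a b) ^ 6 = 1 :=
  commutator_with_transposition_order_dvd_six_general n a b g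
end

section
/- Let G be a finite nonabelian simple group. For every subset S ⊆ G and every g ∈ G \ S, there exists a map φ : G → G that is a word map with constants (induced by some w ∈ F₁ * G) with φ(s) = 1 for all s ∈ S and φ(g) ≠ 1. -/
/-! Induct on the finite set `S`. If `u` vanishes on `S` but not at `g`, and `v = s₀⁻¹ x` vanishes
at `s₀` but not at `g`, then every commutator `⁅u, d v d⁻¹⁆` vanishes on `insert s₀ S`. Some
`d` keeps it nontrivial at `g`: otherwise `u(g) ≠ 1` commutes with all conjugates of
`v(g) ≠ 1`, so the normal core of the centralizer of `u(g)` contains `v(g)` and, `G` being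
simple, is all of `G`; then `u(g)` is central, but the center of a nonabelian simple group is
trivial. -/

/-- A word with constants in one variable over `G`, encoded as a list of letters:
`Sum.inl c` is the constant `c ∈ G`, `Sum.inr true` is `x`, `Sum.inr false` is `x⁻¹`.
Its evaluation at `g ∈ G` is the induced word map with constants. -/
def evalW {G : Type*} [Group G] (w : List (G ⊕ Bool)) (g : G) : G :=
  (w.map fun l => match l with
    | Sum.inl c => c
    | Sum.inr true => g
    | Sum.inr false => g⁻¹).prod

open scoped commutatorElement

section Words

variable {G : Type*} [Group G]

def invW (w : List (G ⊕ Bool)) : List (G ⊕ Bool) :=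
  (w.map fun l => match l with
    | Sum.inl c => Sum.inl c⁻¹
    | Sum.inr b => Sum.inr (!b)).reverse

def conjW (d : G) (w : List (G ⊕ Bool)) : List (G ⊕ Bool) :=
  Sum.inl d :: w ++ [Sum.inl d⁻¹]

def commW (u v : List (G ⊕ Bool)) : List (G ⊕ Bool) :=
  u ++ v ++ invW u ++ invW v

@[simp]
lemma evalW_append (u v : List (G ⊕ Bool)) (x : G) :
    evalW (u ++ v) x = evalW u x * evalW v x := by
  simp [evalW]

@[simp]
lemma evalW_invW (w : List (G ⊕ Bool)) (x : G) : evalW (invW w) x = (evalW w x)⁻¹ := by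
  simp only [evalW, invW, List.prod_inv_reverse, List.map_reverse, List.map_map]
  congr 2
  refine List.map_congr_left fun l _ => ?_
  rcases l with c | (_ | _) <;> simp

@[simp]
lemma evalW_conjW (d : G) (w : List (G ⊕ Bool)) (x : G) :
    evalW (conjW d w) x = d * evalW w x * d⁻¹ := by
  simp [conjW, evalW, mul_assoc]

@[simp]
lemma evalW_commW (u v : List (G ⊕ Bool)) (x : G) :
    evalW (commW u v) x = ⁅evalW u x, evalW v x⁆ := by
  simp [commW, commutatorElement_def, mul_assoc]

lemma evalW_const_mul_var (c x : G) : evalW [Sum.inl c, Sum.inr true] x = c * x := by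
  simp [evalW]

end Words

lemma IsSimpleGroup.center_eq_bot {G : Type*} [Group G] [IsSimpleGroup G]
    (hna : ¬ ∀ a b : G, a * b = b * a) : Subgroup.center G = ⊥ :=
  (Subgroup.center G).normal_of_characteristic.eq_bot_or_eq_top.resolve_right fun h =>
    hna fun a b => (Subgroup.mem_center_iff.mp (h ▸ Subgroup.mem_top a) b).symm

lemma IsSimpleGroup.exists_commutatorElement_conj_ne_one {G : Type*} [Group G]
    [IsSimpleGroup G] (hna : ¬ ∀ a b : G, a * b = b * a) {a b : G} (ha : a ≠ 1) (hb : b ≠ 1) :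
    ∃ d : G, ⁅a, d * b * d⁻¹⁆ ≠ 1 := by
  by_contra! h
  have hb_core : b ∈ (Subgroup.centralizer {a}).normalCore := fun d =>
    Subgroup.mem_centralizer_singleton_iff.mpr (commutatorElement_eq_one_iff_mul_comm.mp (h d)).symm
  have hcore : (Subgroup.centralizer {a}).normalCore = ⊤ :=
    (Subgroup.normalCore_normal _).eq_bot_or_eq_top.resolve_left fun hbot =>
      hb (Subgroup.mem_bot.mp (hbot ▸ hb_core))
  have hcentralizer : Subgroup.centralizer {a} = ⊤ :=
    top_le_iff.mp (hcore ▸ Subgroup.normalCore_le _)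
  have ha_center : a ∈ Subgroup.center G :=
    Subgroup.centralizer_eq_top_iff_subset.mp hcentralizer rfl
  rw [IsSimpleGroup.center_eq_bot hna, Subgroup.mem_bot] at ha_center
  exact ha ha_center

lemma exists_word_vanishing_on_finite {G : Type*} [Group G] [Nontrivial G]
    (hconj : ∀ a b : G, a ≠ 1 → b ≠ 1 → ∃ d : G, ⁅a, d * b * d⁻¹⁆ ≠ 1)
    {S : Set G} (hS : S.Finite) {g : G} (hg : g ∉ S) :
    ∃ w : List (G ⊕ Bool), (∀ s ∈ S, evalW w s = 1) ∧ evalW w g ≠ 1 := by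
  induction S, hS using Set.Finite.induction_on with
  | empty =>
    obtain ⟨c, hc⟩ := exists_ne (1 : G)
    exact ⟨[Sum.inl c], fun s hs => absurd hs (Set.notMem_empty s), by simpa [evalW] using hc⟩
  | @insert s₀ S _ _ ih =>
    obtain ⟨u, hu_S, hu_g⟩ := ih fun h => hg (Set.mem_insert_of_mem _ h)
    let v : List (G ⊕ Bool) := [Sum.inl s₀⁻¹, Sum.inr true]
    have hv_g : evalW v g ≠ 1 := by
      rw [evalW_const_mul_var, Ne, inv_mul_eq_one]
      rintro rfl
      exact hg (Set.mem_insert _ _)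
    obtain ⟨d, hd⟩ := hconj _ _ hu_g hv_g
    refine ⟨commW u (conjW d v), ?_, by simpa using hd⟩
    rintro s (rfl | hs)
    · simp [v, evalW_const_mul_var]
    · simp [hu_S s hs]

/-- Let `G` be a finite nonabelian simple group. For every subset `S ⊆ G` and every
`g ∈ G \ S`, there is a word map with constants `φ : G → G` with `φ(s) = 1` for all
`s ∈ S` and `φ(g) ≠ 1`. -/
theorem exists_word_vanishing_on_set (G : Type*) [Group G] [Fintype G]
    [IsSimpleGroup G] (hna : ¬ ∀ a b : G, a * b = b * a)
    (S : Set G) (g : G) (hg : g ∉ S) :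
    ∃ w : List (G ⊕ Bool), (∀ s ∈ S, evalW w s = 1) ∧ evalW w g ≠ 1 :=
  exists_word_vanishing_on_finite
    (fun _ _ => IsSimpleGroup.exists_commutatorElement_conj_ne_one hna) S.toFinite hg
end

section
/- Let G be a finite nonabelian simple group. Then every function f : G → G is induced by a word with constants, i.e., the evaluation homomorphism ev : F₁ * G → G^G (sending x to the identity function and each constant c to the constant function c, with pointwise multiplication in G^G) is surjective. -/
/-!
The range of `ev` is a subgroup of `G^G` containing the constants and the identity, which
separates points. If `f₁ a ≠ 1` and `f₂ a ≠ 1`, then, as `G` is simple with trivial centre, some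
conjugate `c f₂ c⁻¹` by a constant does not commute with `f₁` at `a`, so `⁅f₁, c f₂ c⁻¹⁆` is
nontrivial at `a` and trivial wherever `f₁` or `f₂` is. Iterating over the points `b ≠ a` gives a
nontrivial function supported on `{a}`. The values at `a` of such functions form a normal
subgroup, hence all of `G`, and every function is a product of these point functions.
-/

/-- The evaluation homomorphism `F₁ * G → G^G`, sending the free generator `x` to the
identity function `id_G` and each constant `c ∈ G` to the constant function with value
`c`; here `G^G` is the group of all functions `G → G` under pointwise multiplication. -/
noncomputable def evalHom (G : Type*) [Group G] :
    Monoid.Coprod (FreeGroup Unit) G →* (G → G) :=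
  Monoid.Coprod.lift (FreeGroup.lift fun _ : Unit => (id : G → G))
    (Pi.constMonoidHom G G)

open Function
open scoped commutatorElement

namespace IsSimpleGroup

variable {G : Type*} [Group G] [IsSimpleGroup G]

theorem center_eq_bot_s10 (hna : ¬ ∀ a b : G, a * b = b * a) : Subgroup.center G = ⊥ :=
  Subgroup.instNormalCenter.eq_bot_or_eq_top.resolve_right fun h => hna fun a b =>
    Subgroup.mem_center_iff.mp (h ▸ Subgroup.mem_top b) a

theorem exists_not_commute_conj (hZ : Subgroup.center G = ⊥) {a b : G} (ha : a ≠ 1)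
    (hb : b ≠ 1) : ∃ c : G, ¬Commute a (c * b * c⁻¹) := by
  by_contra! hcomm
  have hcore : (Subgroup.centralizer {a}).normalCore = ⊤ :=
    (Subgroup.normalCore_normal _).eq_bot_or_eq_top.resolve_left fun h => hb <|
      Subgroup.mem_bot.mp <| h ▸ fun c => Subgroup.mem_centralizer_singleton_iff.mpr (hcomm c).symm
  have hcenter : a ∈ Subgroup.center G := Subgroup.mem_center_iff.mpr fun g =>
    Subgroup.mem_centralizer_singleton_iff.mp <|
      Subgroup.normalCore_le _ (hcore ▸ Subgroup.mem_top g)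
  rw [hZ, Subgroup.mem_bot] at hcenter
  exact ha hcenter

end IsSimpleGroup

namespace Subgroup

variable {X G : Type*} [Group G] [IsSimpleGroup G] {K : Subgroup (X → G)}

theorem exists_mem_mulSupport_subset_inter (hZ : center G = ⊥)
    (hconst : ∀ c : G, const X c ∈ K) {f₁ f₂ : X → G} (hf₁ : f₁ ∈ K) (hf₂ : f₂ ∈ K) {a : X}
    (ha₁ : f₁ a ≠ 1) (ha₂ : f₂ a ≠ 1) :
    ∃ f ∈ K, f a ≠ 1 ∧ mulSupport f ⊆ mulSupport f₁ ∩ mulSupport f₂ := by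
  obtain ⟨c, hc⟩ := IsSimpleGroup.exists_not_commute_conj hZ ha₁ ha₂
  set g := const X c * f₂ * const X c⁻¹
  have hg : g ∈ K := mul_mem (mul_mem (hconst c) hf₂) (hconst c⁻¹)
  refine ⟨⁅f₁, g⁆, ?_, ?_, fun x hx => ⟨fun h₁ => hx ?_, fun h₂ => hx ?_⟩⟩
  · rw [commutatorElement_def]
    exact mul_mem (mul_mem (mul_mem hf₁ hg) (inv_mem hf₁)) (inv_mem hg)
  · exact mt commutatorElement_eq_one_iff_commute.mp hc
  · show ⁅f₁ x, g x⁆ = 1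
    rw [h₁, commutatorElement_one_left]
  · show ⁅f₁ x, c * f₂ x * c⁻¹⁆ = 1
    rw [h₂, mul_one, mul_inv_cancel, commutatorElement_one_right]

theorem exists_mem_ne_one_forall_eq_one (hZ : center G = ⊥)
    (hconst : ∀ c : G, const X c ∈ K) (hsep : (K : Set (X → G)).SeparatesPoints)
    [DecidableEq X] (a : X) (S : Finset X) (haS : a ∉ S) :
    ∃ f ∈ K, f a ≠ 1 ∧ ∀ x ∈ S, f x = 1 := by
  induction S using Finset.induction_on with
  | empty =>
    obtain ⟨c, hc⟩ := exists_ne (1 : G)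
    exact ⟨const X c, hconst c, hc, by simp⟩
  | insert b S hbS ih =>
    obtain ⟨hab, haS⟩ : a ≠ b ∧ a ∉ S := by simpa using haS
    obtain ⟨f₁, hf₁, ha₁, hS⟩ := ih haS
    obtain ⟨f₂, hf₂, hab₂⟩ := hsep hab
    have hf₂' : f₂ * const X (f₂ b)⁻¹ ∈ K := mul_mem hf₂ (hconst _)
    obtain ⟨f, hf, ha, hsupp⟩ := exists_mem_mulSupport_subset_inter hZ hconst hf₁ hf₂' ha₁
      (mul_inv_eq_one.not.mpr hab₂)
    refine ⟨f, hf, ha, fun x hx => ?_⟩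
    by_contra hfx
    obtain ⟨h₁, h₂⟩ := hsupp hfx
    rcases Finset.mem_insert.mp hx with rfl | hx
    · exact h₂ (mul_inv_cancel _)
    · exact h₁ (hS x hx)

theorem exists_mulSingle_mem (hZ : center G = ⊥)
    (hconst : ∀ c : G, const X c ∈ K) (hsep : (K : Set (X → G)).SeparatesPoints)
    [Fintype X] [DecidableEq X] (a : X) : ∃ v ≠ 1, Pi.mulSingle a v ∈ K := by
  obtain ⟨f, hf, ha, hS⟩ :=
    exists_mem_ne_one_forall_eq_one hZ hconst hsep a _ (Finset.notMem_erase a Finset.univ)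
  have hfa : f = Pi.mulSingle a (f a) := by
    ext x
    rcases eq_or_ne x a with rfl | hx
    · simp
    · simp [hx, hS x (Finset.mem_erase.mpr ⟨hx, Finset.mem_univ x⟩)]
  exact ⟨f a, ha, hfa ▸ hf⟩

theorem mulSingle_mem (hZ : center G = ⊥)
    (hconst : ∀ c : G, const X c ∈ K) (hsep : (K : Set (X → G)).SeparatesPoints)
    [Fintype X] [DecidableEq X] (a : X) (v : G) : Pi.mulSingle a v ∈ K := by
  set N := K.comap (MonoidHom.mulSingle (fun _ => G) a)
  have hN : N.Normal := ⟨fun w hw c => by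
    have hconj : Pi.mulSingle a (c * w * c⁻¹) = const X c * Pi.mulSingle a w * const X c⁻¹ := by
      ext x
      rcases eq_or_ne x a with rfl | hx <;> simp [*]
    show Pi.mulSingle a (c * w * c⁻¹) ∈ K
    exact hconj ▸ mul_mem (mul_mem (hconst c) hw) (hconst c⁻¹)⟩
  obtain ⟨w, hw, hwK⟩ := exists_mulSingle_mem hZ hconst hsep a
  have hNtop : N = ⊤ := hN.eq_bot_or_eq_top.resolve_left fun h => hw <| mem_bot.mp (h ▸ hwK)
  exact (hNtop ▸ mem_top v : v ∈ N)

theorem eq_top_of_const_mem_of_separatesPoints [Finite X] (hZ : center G = ⊥)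
    (hconst : ∀ c : G, const X c ∈ K) (hsep : (K : Set (X → G)).SeparatesPoints) :
    K = ⊤ := by
  classical
  have := Fintype.ofFinite X
  exact eq_top_iff.mpr fun f _ =>
    pi_mem_of_mulSingle_mem f fun a => mulSingle_mem hZ hconst hsep a _

end Subgroup

/-- Let `G` be a finite nonabelian simple group. Then every function `f : G → G` is
induced by a word with constants, i.e. the evaluation homomorphism
`ev : F₁ * G → G^G` is surjective. -/
theorem evalHom_surjective (G : Type*) [Group G] [Fintype G] [IsSimpleGroup G]
    (hna : ¬ ∀ a b : G, a * b = b * a) :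
    Function.Surjective (evalHom G) := by
  have hconst (c : G) : const G c ∈ (evalHom G).range := ⟨Monoid.Coprod.inr c, rfl⟩
  have hid : id ∈ (evalHom G).range := ⟨Monoid.Coprod.inl (FreeGroup.of ()), by simp [evalHom]⟩
  exact MonoidHom.range_eq_top.mp <| Subgroup.eq_top_of_const_mem_of_separatesPoints
    (IsSimpleGroup.center_eq_bot_s10 hna) hconst fun _ _ hab => ⟨id, hid, hab⟩
end

section
/- Let G be a finite nonabelian group such that every function f : G → G is induced by a word with constants from F₁ * G. Then G is simple. -/
section WordMap

variable {G H : Type*} [Group G] [Group H]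

theorem map_evalW (φ : G →* H) (w : List (G ⊕ Bool)) (g : G) :
    φ (evalW w g) = evalW (w.map (Sum.map φ id)) (φ g) := by
  induction w with
  | nil => simp [evalW]
  | cons a w ih =>
    rcases a with c | (_ | _) <;> simp_all [evalW]

theorem evalW_mk_eq_of_mk_eq (N : Subgroup G) [N.Normal] (w : List (G ⊕ Bool)) {g g' : G}
    (h : (g : G ⧸ N) = g') : ((evalW w g : G) : G ⧸ N) = evalW w g' := by
  have := map_evalW (QuotientGroup.mk' N) w
  simp only [QuotientGroup.mk'_apply] at this
  rw [this, this, h]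

theorem mem_of_evalW_eq {N : Subgroup G} [N.Normal] {g h : G} (hg : g ∈ N)
    {w : List (G ⊕ Bool)} (hwg : evalW w g = h) (hw1 : evalW w 1 = 1) : h ∈ N := by
  have := evalW_mk_eq_of_mk_eq N w ((QuotientGroup.eq_one_iff g).mpr hg)
  rwa [hwg, hw1, QuotientGroup.mk_one, QuotientGroup.eq_one_iff] at this

end WordMap

theorem simple_of_all_maps_word_maps_general (G : Type*) [Group G]
    (hna : ¬ ∀ a b : G, a * b = b * a)
    (hrep : ∀ f : G → G, ∃ w : List (G ⊕ Bool), ∀ g : G, evalW w g = f g) :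
    IsSimpleGroup G := by
  have : Nontrivial G := by
    by_contra h
    exact hna fun a b => (not_nontrivial_iff_subsingleton.mp h).elim _ _
  refine ⟨fun N _ => N.bot_or_exists_ne_one.imp_right fun ⟨g, hgN, hg1⟩ => ?_⟩
  refine (Subgroup.eq_top_iff' N).mpr fun h => ?_
  classical
  obtain ⟨w, hw⟩ := hrep fun x => if x = g then h else 1
  exact mem_of_evalW_eq hgN (by rw [hw, if_pos rfl]) (by rw [hw, if_neg hg1.symm])

/-- Let `G` be a finite nonabelian group such that every function `f : G → G` is induced
by a word with constants from `F₁ * G`. Then `G` is simple. -/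
theorem simple_of_all_maps_word_maps (G : Type*) [Group G] [Fintype G]
    (hna : ¬ ∀ a b : G, a * b = b * a)
    (hrep : ∀ f : G → G, ∃ w : List (G ⊕ Bool), ∀ g : G, evalW w g = f g) :
    IsSimpleGroup G :=
  simple_of_all_maps_word_maps_general G hna hrep
end

section
/- Suppose w ∈ F_r * S_n is a strong word with constants (removing all constants from its reduced form causes no cancellation among the variables), w is not itself a constant from S_n, and n ≥ 2. If the induced map w : S_n^r → S_n is constant, then ℓ(w) ≥ n/2. -/
/-!
Suppose `2 l < n`. Evaluate the word at a point `x` from right to left, choosing the values of the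
permutations `σ_k` only along the way: each letter `x_k^{±1}` sends the current point to a new
point `t`, which is recorded as an edge of `σ_k`. At most `l` edges are ever recorded, so fewer than
`2 l < n` values of `t` are excluded by keeping the recorded edges the graph of a partial injection
and by keeping the next letter's entry point unrecorded. Strongness is what makes the second
condition independent of `t`: if the next letter is `x_k^{∓1}`, its entry point would be the
target `t` itself. Choosing the last `t` also so that `c₀ t` differs from the value of the word at
`σ = 1` shows that the word map is not constant.
-/

/-- Evaluation of the word with constants
`c₀ x_{i 0}^{ε 0} c₁ ⋯ x_{i (l-1)}^{ε (l-1)} c_l ∈ F_r * S_n` at `σ : Fin r → S_n`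
(`ε j = true` stands for the letter `x_{i j}`, `false` for `x_{i j}⁻¹`). -/
def evalWC {r n l : ℕ} (i : Fin l → Fin r) (ε : Fin l → Bool)
    (c : Fin (l + 1) → Equiv.Perm (Fin n)) (σ : Fin r → Equiv.Perm (Fin n)) :
    Equiv.Perm (Fin n) :=
  c 0 * ((List.finRange l).map fun j =>
    (if ε j then σ (i j) else (σ (i j))⁻¹) * c j.succ).prod

open Equiv Finset

section PartialAssignment

variable {ι α : Type*}

/-- The edge `(a, σ_k a)` of `σ_k` used when the letter `x_k^e` moves `p` to `t`. -/
def letterEdge (e : Bool) (p t : α) : α × α := bif e then (p, t) else (t, p)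

def Realizes (σ : ι → Perm α) (E : Finset (ι × α × α)) : Prop :=
  ∀ x ∈ E, σ x.1 x.2.1 = x.2.2

theorem apply_letterEdge_iff (π : Perm α) (e : Bool) (p t : α) :
    π (letterEdge e p t).1 = (letterEdge e p t).2 ↔ (if e then π else π⁻¹) p = t := by
  cases e
  · simp only [letterEdge, cond_false, Bool.false_eq_true, if_false, Perm.inv_def]
    exact ((Equiv.symm_apply_eq π).trans eq_comm).symm
  · simp [letterEdge]

variable [DecidableEq ι] [DecidableEq α]

/-- The points at which `x_k^e` is already determined by `E`. -/
def pinned (E : Finset (ι × α × α)) (k : ι) (e : Bool) : Finset α :=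
  (E.filter (·.1 = k)).image fun x => bif e then x.2.1 else x.2.2

theorem card_pinned_le (E : Finset (ι × α × α)) (k : ι) (e : Bool) :
    (pinned E k e).card ≤ E.card :=
  card_image_le.trans (card_filter_le _ _)

theorem pinned_insert_letterEdge_subset (E : Finset (ι × α × α)) {k k' : ι} {e e' : Bool}
    (p t : α) (h : k' = k → e' = e) :
    pinned (insert (k, letterEdge e p t) E) k' e' ⊆ insert p (pinned E k' e') := by
  rw [pinned, filter_insert]
  split_ifs with hk
  · obtain rfl := h hk.symm
    rw [image_insert]
    cases e' <;> exact insert_subset_insert _ (by simp [pinned])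
  · exact subset_insert _ _

theorem Realizes.exists_insert {σ : ι → Perm α} {E : Finset (ι × α × α)} (hσ : Realizes σ E)
    {k : ι} {a b : α} (ha : ∀ y, (k, a, y) ∉ E) (hb : ∀ x, (k, x, b) ∉ E) :
    ∃ σ' : ι → Perm α, Realizes σ' (insert (k, a, b) E) := by
  refine ⟨Pi.mulSingle k (swap (σ k a) b) * σ, ?_⟩
  rintro ⟨k', x, y⟩ hx
  rcases mem_insert.1 hx with h | h
  · simp_all
  · have hxy : σ k' x = y := hσ _ h
    by_cases hk : k' = k
    · subst hk
      have hya : y ≠ σ k' a := fun hya => ha y (by rwa [← σ k' |>.injective (hxy.trans hya)])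
      have hyb : y ≠ b := fun hyb => hb x (hyb ▸ h)
      simp [hxy, swap_apply_of_ne_of_ne hya hyb]
    · simp [hxy, Pi.mulSingle_eq_of_ne hk]

theorem Realizes.exists_insert_letterEdge [Fintype α] {σ : ι → Perm α}
    {E : Finset (ι × α × α)} (hσ : Realizes σ E) {k : ι} {e : Bool} {p : α}
    (hp : p ∉ pinned E k e) (Y : Finset α) (hY : E.card + Y.card < Fintype.card α) :
    ∃ t ∉ Y, ∃ σ' : ι → Perm α, Realizes σ' (insert (k, letterEdge e p t) E) := by
  have hcard : (pinned E k (!e) ∪ Y).card < (univ : Finset α).card :=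
    (card_union_le _ _).trans_lt ((Nat.add_le_add_right (card_pinned_le _ _ _) _).trans_lt hY)
  obtain ⟨t, -, ht⟩ := exists_mem_notMem_of_card_lt_card hcard
  rw [mem_union, not_or] at ht
  refine ⟨t, ht.2, hσ.exists_insert ?_ ?_⟩ <;>
    cases e <;> simp_all [pinned]

end PartialAssignment

def IsStrong {ι : Type*} {l : ℕ} (i : Fin l → ι) (ε : Fin l → Bool) : Prop :=
  ∀ (j : ℕ) (hj : j + 1 < l),
    i ⟨j, Nat.lt_of_succ_lt hj⟩ = i ⟨j + 1, hj⟩ → ε ⟨j, Nat.lt_of_succ_lt hj⟩ = ε ⟨j + 1, hj⟩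

theorem IsStrong.of_cons {ι : Type*} {l : ℕ} {k : ι} {e : Bool} {i : Fin l → ι}
    {ε : Fin l → Bool} (h : IsStrong (Fin.cons k i : Fin (l + 1) → ι) (Fin.cons e ε)) :
    IsStrong i ε :=
  fun j hj => h (j + 1) (by omega)

theorem IsStrong.head_of_cons {ι : Type*} {l : ℕ} {k : ι} {e : Bool} {i : Fin (l + 1) → ι}
    {ε : Fin (l + 1) → Bool} (h : IsStrong (Fin.cons k i : Fin (l + 2) → ι) (Fin.cons e ε)) :
    k = i 0 → e = ε 0 := by
  exact h 0 (by omega)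

theorem IsStrong.cons_self_tail {ι : Type*} {l : ℕ} {i : Fin (l + 1) → ι}
    {ε : Fin (l + 1) → Bool} (h : IsStrong i ε) :
    IsStrong (Fin.cons (i 0) (Fin.tail i) : Fin (l + 1) → ι) (Fin.cons (ε 0) (Fin.tail ε)) := by
  rwa [Fin.cons_self_tail, Fin.cons_self_tail]

theorem evalWC_succ {r n l : ℕ} (i : Fin (l + 1) → Fin r) (ε : Fin (l + 1) → Bool)
    (c : Fin (l + 2) → Perm (Fin n)) (σ : Fin r → Perm (Fin n)) :
    evalWC i ε c σ = c 0 * (if ε 0 then σ (i 0) else (σ (i 0))⁻¹) *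
      evalWC (Fin.tail i) (Fin.tail ε) (Fin.tail c) σ := by
  rw [evalWC, List.finRange_succ, List.map_cons, List.prod_cons, List.map_map]
  simp only [evalWC, mul_assoc]
  rfl

theorem evalWC_apply_of_realizes_insert {r n l : ℕ} {i : Fin (l + 1) → Fin r}
    {ε : Fin (l + 1) → Bool} {c : Fin (l + 2) → Perm (Fin n)}
    {E : Finset (Fin r × Fin n × Fin n)} {x q t : Fin n}
    (hq : ∀ τ, Realizes τ E → evalWC (Fin.tail i) (Fin.tail ε) (Fin.tail c) τ x = q)
    (τ : Fin r → Perm (Fin n)) (hτ : Realizes τ (insert (i 0, letterEdge (ε 0) q t) E)) :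
    evalWC i ε c τ x = c 0 t := by
  rw [Realizes, forall_mem_insert] at hτ
  rw [evalWC_succ, Perm.mul_apply, Perm.mul_apply, hq τ hτ.2,
    (apply_letterEdge_iff _ _ _ _).1 hτ.1]

/-- `x_k^e` is the letter preceding the word, so its entry point `p` must stay free. -/
theorem IsStrong.exists_forcing_edges {r n l : ℕ} {k : Fin r} {e : Bool} {i : Fin l → Fin r}
    {ε : Fin l → Bool} (hs : IsStrong (Fin.cons k i : Fin (l + 1) → Fin r) (Fin.cons e ε))
    (c : Fin (l + 1) → Perm (Fin n)) (x : Fin n) (hn : 2 * l ≤ n) :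
    ∃ (E : Finset (Fin r × Fin n × Fin n)) (p : Fin n), E.card ≤ l ∧ (∃ σ, Realizes σ E) ∧
      (∀ τ, Realizes τ E → evalWC i ε c τ x = p) ∧ p ∉ pinned E k e := by
  induction l generalizing k e with
  | zero =>
    refine ⟨∅, c 0 x, le_rfl, ⟨1, fun _ h => absurd h (notMem_empty _)⟩, fun τ _ => ?_, ?_⟩
    · simp [evalWC]
    · simp [pinned]
  | succ l ih =>
    obtain ⟨E, q, hE, ⟨σ, hσ⟩, hq, hfresh⟩ :=
      ih hs.of_cons.cons_self_tail (Fin.tail c) (by omega)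
    set Y := (insert q (pinned E k e)).image (c 0).symm
    have hY : Y.card ≤ E.card + 1 :=
      card_image_le.trans ((card_insert_le _ _).trans (Nat.succ_le_succ (card_pinned_le E k e)))
    obtain ⟨t, ht, σ', hσ'⟩ :=
      hσ.exists_insert_letterEdge hfresh Y (by rw [Fintype.card_fin]; omega)
    refine ⟨insert (i 0, letterEdge (ε 0) q t) E, c 0 t, (card_insert_le _ _).trans (by omega),
      ⟨σ', hσ'⟩, evalWC_apply_of_realizes_insert hq, fun hmem => ht (mem_image.2 ⟨c 0 t, ?_,
      (c 0).symm_apply_apply t⟩)⟩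
    exact pinned_insert_letterEdge_subset E q t hs.head_of_cons hmem

/-- If `w ∈ F_r * S_n` (with `n ≥ 2`) is a strong word with constants (no adjacent pair of
letters `x_{i j}^{ε j}, x_{i (j+1)}^{ε (j+1)}` with `i j = i (j+1)` and
`ε j = −ε (j+1)`), `w` is not a constant (`l ≥ 1`), and the induced word map
`S_n^r → S_n` is constant, then `ℓ(w) = l ≥ n / 2`, i.e. `n ≤ 2 l`. -/
theorem strong_constant_word_long (r n l : ℕ) (hl : 0 < l)
    (i : Fin l → Fin r) (ε : Fin l → Bool) (c : Fin (l + 1) → Equiv.Perm (Fin n))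
    (hstrong : ∀ (j : ℕ) (hj : j + 1 < l),
      i ⟨j, by omega⟩ = i ⟨j + 1, hj⟩ → ε ⟨j, by omega⟩ = ε ⟨j + 1, hj⟩)
    (hconst : ∀ σ τ : Fin r → Equiv.Perm (Fin n), evalWC i ε c σ = evalWC i ε c τ) :
    n ≤ 2 * l := by
  by_contra! hlt
  obtain ⟨m, rfl⟩ : ∃ m, l = m + 1 := ⟨l - 1, by omega⟩
  have hs : IsStrong i ε := hstrong
  let x : Fin n := ⟨0, by omega⟩
  obtain ⟨E, q, hE, ⟨σ, hσ⟩, hq, hfresh⟩ :=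
    hs.cons_self_tail.exists_forcing_edges (Fin.tail c) x (by omega)
  obtain ⟨t, ht, σ', hσ'⟩ :=
    hσ.exists_insert_letterEdge hfresh {(c 0).symm (evalWC i ε c 1 x)}
      (by rw [card_singleton, Fintype.card_fin]; omega)
  apply ht
  rw [mem_singleton, Equiv.eq_symm_apply, ← evalWC_apply_of_realizes_insert hq σ' hσ',
    hconst σ' 1]
end
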